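/- arXiv:1109.6345 — 3 statements merged into one kernel-verified Lean document; each statement's English description precedes it below -/
import Mathlib

section
/- Let A be a semi-directed cycle all of whose edges are ci-arcs, in the dependency graph N* of a TCP-net N, and fix one of the two directions along A as 'clockwise'. Then A is conditionally acyclic if and only if for every assignment u to shared(A) there exist ci-arcs γ1, γ2 of A (not necessarily distinct) such that no CIT entry of γ1 consistent with u orients γ1 clockwise along A and no CIT entry of γ2 consistent with u orients γ2 counter-clockwise along A. -/
universe u v

/-- A TCP-net over a set of variables `V` with domains `D`.
`cp` are the directed cp-arcs, `iarc` the directed i-arcs, `ci` the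
(symmetric) ci-arcs with selector sets `sel`.  `cpt X o` is the strict
partial order on `D X` prescribed by the CPT of `X` given the values of
the parents of `X` in `o` (it only depends on those values), and
`cit X Y o` means that the CIT of the ci-arc `(X,Y)` declares `X` more
important than `Y` on the restriction of `o` to the selector set
`sel X Y` (it only depends on those values). -/
structure TCPNet (V : Type u) (D : V → Type v) where
  cp : V → V → Prop
  iarc : V → V → Prop
  ci : V → V → Prop
  sel : V → V → Set V
  cpt : (X : V) → ((Y : V) → D Y) → D X → D X → Prop
  cit : V → V → ((Y : V) → D Y) → Prop
  cp_ne : ∀ X Y, cp X Y → X ≠ Y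
  iarc_ne : ∀ X Y, iarc X Y → X ≠ Y
  ci_ne : ∀ X Y, ci X Y → X ≠ Y
  ci_symm : ∀ X Y, ci X Y → ci Y X
  sel_symm : ∀ X Y, sel X Y = sel Y X
  sel_nonempty : ∀ X Y, ci X Y → (sel X Y).Nonempty
  sel_not_endpoint : ∀ X Y, ci X Y → X ∉ sel X Y ∧ Y ∉ sel X Y
  iarc_indep : ∀ X Y, iarc X Y → ¬ cp X Y ∧ ¬ cp Y X
  ci_indep : ∀ X Y, ci X Y → ¬ cp X Y ∧ ¬ cp Y X
  cpt_irrefl : ∀ X o a, ¬ cpt X o a a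
  cpt_trans : ∀ X o a b c, cpt X o a b → cpt X o b c → cpt X o a c
  cpt_local : ∀ X o o', (∀ Y, cp Y X → o Y = o' Y) → ∀ a b, (cpt X o a b ↔ cpt X o' a b)
  cit_ci : ∀ X Y o, cit X Y o → ci X Y
  cit_antisymm : ∀ X Y o, cit X Y o → ¬ cit Y X o
  cit_local : ∀ X Y o o', (∀ Z ∈ sel X Y, o Z = o' Z) → (cit X Y o ↔ cit X Y o')

variable {V : Type u} {D : V → Type v}

/-- A preference order: a strict partial order (irreflexive and transitive). -/
def IsPrefOrder {α : Sort*} (r : α → α → Prop) : Prop :=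
  (∀ a, ¬ r a a) ∧ ∀ a b c, r a b → r b c → r a c

/-- A preference order `pref` on outcomes satisfies the TCP-net `N`:
(i) it satisfies every CPT, (ii) every i-arc, and (iii) every CIT entry. -/
def TCPNet.Satisfies (N : TCPNet V D)
    (pref : ((X : V) → D X) → ((X : V) → D X) → Prop) : Prop :=
  (∀ (X : V) (o o' : (Y : V) → D Y),
      (∀ Y, Y ≠ X → o Y = o' Y) → N.cpt X o (o X) (o' X) → pref o o') ∧
  (∀ (X Y : V) (o o' : (Z : V) → D Z), N.iarc X Y →
      (∀ Z, Z ≠ X → Z ≠ Y → o Z = o' Z) → N.cpt X o (o X) (o' X) → pref o o') ∧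
  (∀ (X Y : V) (o o' : (Z : V) → D Z), N.cit X Y o →
      (∀ Z, Z ≠ X → Z ≠ Y → o Z = o' Z) → N.cpt X o (o X) (o' X) → pref o o')

def TCPNet.Satisfiable (N : TCPNet V D) : Prop :=
  ∃ pref, IsPrefOrder pref ∧ N.Satisfies pref

def TCPNet.Entails (N : TCPNet V D) (o o' : (X : V) → D X) : Prop :=
  ∀ pref, IsPrefOrder pref → N.Satisfies pref → pref o o'

/-- The directed edges of the dependency graph `N*`: cp-arcs, i-arcs, and
the edges from each selector variable of a ci-arc to the endpoints of that arc. -/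
def TCPNet.dirEdge (N : TCPNet V D) (X Y : V) : Prop :=
  N.cp X Y ∨ N.iarc X Y ∨ ∃ W, N.ci Y W ∧ X ∈ N.sel Y W

/-- The edges of the `w`-directed graph of `N*`. -/
def TCPNet.wEdge (N : TCPNet V D) (w : (X : V) → D X) (X Y : V) : Prop :=
  N.dirEdge X Y ∨ N.cit X Y w

/-- Conditional acyclicity: every `w`-directed graph of `N*` is acyclic. -/
def TCPNet.CondAcyclic (N : TCPNet V D) : Prop :=
  ∀ (w : (X : V) → D X) (X : V), ¬ Relation.TransGen (N.wEdge w) X X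

/-- The cyclic successor on `Fin n`. -/
def finNext {n : ℕ} (i : Fin n) : Fin n := ⟨(i.val + 1) % n, Nat.mod_lt _ i.pos⟩

/-- `v`, `ed` describe a semi-directed cycle of the dependency graph of `N`:
`v` lists the vertices of a simple cycle (in the traversal direction, which is
the direction of the cycle if it contains directed edges), and `ed i` tells
whether the edge from `v i` to `v (i+1)` is a directed edge of `N*` (`true`),
or a ci-arc (`false`).  Not all edges are directed, and all directed edges
point in the traversal direction. -/
def IsSemiDirCycle (N : TCPNet V D) {n : ℕ} (v : Fin n → V) (ed : Fin n → Bool) : Prop :=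
  2 ≤ n ∧ Function.Injective v ∧
    (∀ i, ed i = true → N.dirEdge (v i) (v (finNext i))) ∧
    (∀ i, ed i = false → N.ci (v i) (v (finNext i))) ∧
    (∃ i, ed i = false)

/-- The semi-directed cycle `(v, ed)` is conditionally directed: some assignment
orients all its ci-arcs so that it becomes a directed cycle (all edges in the
traversal direction or, when all edges are ci-arcs, possibly all in the
opposite direction). -/
def CondDirected (N : TCPNet V D) {n : ℕ} (v : Fin n → V) (ed : Fin n → Bool) : Prop :=
  ∃ w : (X : V) → D X,
    (∀ i, ed i = false → N.cit (v i) (v (finNext i)) w) ∨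
    ((∀ i, ed i = false) ∧ ∀ i, N.cit (v (finNext i)) (v i) w)

/-- Some CIT entry of the ci-arc `(X,Y)` that is consistent with the
assignment `u` on the variables `S` declares `X` more important than `Y`. -/
def Orients (N : TCPNet V D) (S : Set V) (u : (X : V) → D X) (X Y : V) : Prop :=
  ∃ w : (Z : V) → D Z, (∀ Z ∈ S, w Z = u Z) ∧ N.cit X Y w

/-- `shared(A)`: the union of the pairwise intersections of the selector
sets of the ci-arcs of the semi-directed cycle `(v, ed)`. -/
def sharedSet (N : TCPNet V D) {n : ℕ} (v : Fin n → V) (ed : Fin n → Bool) : Set V :=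
  {Z | ∃ i j, i ≠ j ∧ ed i = false ∧ ed j = false ∧
    Z ∈ N.sel (v i) (v (finNext i)) ∧ Z ∈ N.sel (v j) (v (finNext j))}

/-! A CIT entry depends only on the selector set of its ci-arc, and the selector sets of
distinct ci-arcs of the cycle meet only inside `shared(A)`. Hence entries that are each
consistent with one assignment `u` to `shared(A)` can be glued into a single assignment,
which then orients every ci-arc at once; so the cycle can be made directed clockwise
(counter-clockwise) exactly when some `u` admits a clockwise (counter-clockwise) entry
for every arc. -/

theorem Set.exists_eqOn_of_pairwise_inter_subset {ι α : Type*} {β : α → Type*}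
    (T : ι → Set α) (S : Set α) (hS : ∀ i j, i ≠ j → T i ∩ T j ⊆ S)
    (u : ∀ a, β a) (w : ι → ∀ a, β a) (hw : ∀ i, ∀ a ∈ S, w i a = u a) :
    ∃ f : ∀ a, β a, ∀ i, ∀ a ∈ T i, f a = w i a := by
  classical
  refine ⟨fun a => if h : ∃ i, a ∈ T i then w h.choose a else u a, fun i a ha => ?_⟩
  have h : ∃ i, a ∈ T i := ⟨i, ha⟩
  simp only [dif_pos h]
  by_cases hji : h.choose = i
  · rw [hji]
  · have haS : a ∈ S := hS _ _ hji ⟨h.choose_spec, ha⟩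
    rw [hw _ a haS, hw i a haS]

theorem TCPNet.exists_cit_of_forall_orients (N : TCPNet V D) {ι : Type*} (X Y : ι → V)
    (S : Set V) (hS : ∀ i j, i ≠ j → N.sel (X i) (Y i) ∩ N.sel (X j) (Y j) ⊆ S)
    (u : (Z : V) → D Z) (h : ∀ i, Orients N S u (X i) (Y i)) :
    ∃ w : (Z : V) → D Z, ∀ i, N.cit (X i) (Y i) w := by
  choose wi hwi hcit using h
  obtain ⟨w, hw⟩ := Set.exists_eqOn_of_pairwise_inter_subset _ S hS u wi hwi
  exact ⟨w, fun i => (N.cit_local _ _ _ _ (hw i)).mpr (hcit i)⟩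

theorem sel_inter_subset_sharedSet (N : TCPNet V D) {n : ℕ} (v : Fin n → V)
    (ed : Fin n → Bool) (hund : ∀ k, ed k = false) {i j : Fin n} (hij : i ≠ j) :
    N.sel (v i) (v (finNext i)) ∩ N.sel (v j) (v (finNext j)) ⊆ sharedSet N v ed :=
  fun _ ⟨hi, hj⟩ => ⟨i, j, hij, hund i, hund j, hi, hj⟩

theorem orients_of_cit (N : TCPNet V D) (S : Set V) {w : (Z : V) → D Z} {X Y : V}
    (h : N.cit X Y w) : Orients N S w X Y :=
  ⟨w, fun _ _ => rfl, h⟩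

theorem stmt9_general
    (N : TCPNet V D) {n : ℕ} (v : Fin n → V) (ed : Fin n → Bool)
    (hund : ∀ k, ed k = false) :
    ¬ CondDirected N v ed ↔
      ∀ u : (X : V) → D X,
        (∃ i, ¬ Orients N (sharedSet N v ed) u (v i) (v (finNext i))) ∧
        (∃ j, ¬ Orients N (sharedSet N v ed) u (v (finNext j)) (v j)) := by
  have hS := fun i j (hij : i ≠ j) => sel_inter_subset_sharedSet N v ed hund hij
  constructor
  · intro hnd u
    constructor
    · by_contra! hcw
      obtain ⟨w, hw⟩ := N.exists_cit_of_forall_orients _ _ _ hS u hcw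
      exact hnd ⟨w, .inl fun i _ => hw i⟩
    · by_contra! hccw
      obtain ⟨w, hw⟩ := N.exists_cit_of_forall_orients _ _ _
        (by simpa only [N.sel_symm (v (finNext _))] using hS) u hccw
      exact hnd ⟨w, .inr ⟨hund, hw⟩⟩
  · rintro h ⟨w, hcw | ⟨-, hccw⟩⟩
    · obtain ⟨i, hi⟩ := (h w).1
      exact hi (orients_of_cit N _ (hcw i (hund i)))
    · obtain ⟨j, hj⟩ := (h w).2
      exact hj (orients_of_cit N _ (hccw j))

/-- a semi-directed cycle all of whose edges are ci-arcs (with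
the traversal direction of `v` fixed as clockwise) is conditionally acyclic
iff for every assignment `u` to `shared(A)` there are ci-arcs `γ1, γ2` of the
cycle (not necessarily distinct) such that no CIT entry of `γ1` consistent
with `u` orients `γ1` clockwise and no CIT entry of `γ2` consistent with `u`
orients `γ2` counter-clockwise. -/
theorem stmt9 [Fintype V] [∀ X, Fintype (D X)] [∀ X, Nontrivial (D X)]
    (N : TCPNet V D) {n : ℕ} (v : Fin n → V) (ed : Fin n → Bool)
    (hA : IsSemiDirCycle N v ed)
    (hund : ∀ k, ed k = false) :
    ¬ CondDirected N v ed ↔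
      ∀ u : (X : V) → D X,
        (∃ i, ¬ Orients N (sharedSet N v ed) u (v i) (v (finNext i))) ∧
        (∃ j, ¬ Orients N (sharedSet N v ed) u (v (finNext j)) (v j)) :=
  stmt9_general N v ed hund
end

section
/- Let N be a TCP-net in which every CPT order ≻^X_p is a strict total order on D(X), and let G be the directed graph on D(V) with an edge from o1 to o2 exactly when there is an improving flipping sequence of length one (a single CP-flip or I-flip) from o1 to o2. Then every strict partial order ≻ on D(V) that respects the paths in G (i.e., o2 ≻ o1 whenever there is a nonempty directed path from o1 to o2 in G) satisfies N. -/
universe u v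

variable {V : Type u} {D : V → Type v}

/-- A single improving flip from `o` to `o'` sanctioned by `N`: either a
CP-flip (exactly one variable improves, given its parents' common values) or
an I-flip (one variable improves, another worsens, and the former is more
important than the latter via an i-arc or a ci-arc whose CIT declares it so
on the common values of the selector set). -/
def ImpFlip (N : TCPNet V D) (o o' : (X : V) → D X) : Prop :=
  (∃ X, (∀ Y, Y ≠ X → o Y = o' Y) ∧ o X ≠ o' X ∧ N.cpt X o (o' X) (o X)) ∨
  (∃ X Y, X ≠ Y ∧ o X ≠ o' X ∧ o Y ≠ o' Y ∧ (∀ Z, Z ≠ X → Z ≠ Y → o Z = o' Z) ∧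
    N.cpt X o (o' X) (o X) ∧ N.cpt Y o (o Y) (o' Y) ∧ (N.iarc X Y ∨ N.cit X Y o))

/-!
Each condition of `TCPNet.Satisfies` compares outcomes `o`, `o'` such that `o` arises from `o'`
by improving a variable `X` and possibly changing a less important variable `Y`. If `Y` is
unchanged this is a CP-flip; if `Y` gets worse it is an I-flip; by totality of the CPT of `Y`
the only remaining case is that `Y` improves as well, and then, since `Y` is not a parent of `X`,
flipping first `Y` and then `X` is a path of two CP-flips.
-/

namespace TCPNet

variable {N : TCPNet V D}

theorem cpt_ne {X : V} {o : (Y : V) → D Y} {a b : D X} (h : N.cpt X o a b) : a ≠ b := by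
  rintro rfl
  exact N.cpt_irrefl X o a h

theorem cpt_congr_of_eq_off {X Y : V} {o o' : (Z : V) → D Z} (hYX : ¬ N.cp Y X)
    (hag : ∀ Z, Z ≠ X → Z ≠ Y → o Z = o' Z) (a b : D X) :
    N.cpt X o a b ↔ N.cpt X o' a b :=
  N.cpt_local X o o' (fun Z hZ => hag Z (N.cp_ne Z X hZ) (by rintro rfl; exact hYX hZ)) a b

theorem cit_congr_of_eq_off {X Y : V} {o o' : (Z : V) → D Z} (hci : N.ci X Y)
    (hag : ∀ Z, Z ≠ X → Z ≠ Y → o Z = o' Z) :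
    N.cit X Y o ↔ N.cit X Y o' := by
  obtain ⟨hX, hY⟩ := N.sel_not_endpoint X Y hci
  exact N.cit_local X Y o o' fun Z hZ =>
    hag Z (by rintro rfl; exact hX hZ) (by rintro rfl; exact hY hZ)

theorem impFlip_of_cpt {X : V} {o o' : (Y : V) → D Y} (hag : ∀ Y, Y ≠ X → o Y = o' Y)
    (hc : N.cpt X o (o X) (o' X)) : ImpFlip N o' o :=
  Or.inl ⟨X, fun Y hY => (hag Y hY).symm, (cpt_ne hc).symm,
    (N.cpt_local X o o' (fun Y hY => hag Y (N.cp_ne Y X hY)) _ _).mp hc⟩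

theorem transGen_impFlip_of_cpt_of_important
    (htotal : ∀ (X : V) (o : (Y : V) → D Y) (a b : D X), a ≠ b →
      N.cpt X o a b ∨ N.cpt X o b a)
    {X Y : V} {o o' : (Z : V) → D Z} (hXY : X ≠ Y) (hYX_cp : ¬ N.cp Y X)
    (himp : N.iarc X Y ∨ N.cit X Y o') (hag : ∀ Z, Z ≠ X → Z ≠ Y → o Z = o' Z)
    (hc : N.cpt X o (o X) (o' X)) : Relation.TransGen (ImpFlip N) o' o := by
  classical
  have hc' : N.cpt X o' (o X) (o' X) := (cpt_congr_of_eq_off hYX_cp hag _ _).mp hc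
  by_cases hY : o Y = o' Y
  · refine .single (impFlip_of_cpt (fun Z hZX => ?_) hc)
    obtain rfl | hZY := eq_or_ne Z Y
    · exact hY
    · exact hag Z hZX hZY
  rcases htotal Y o' (o' Y) (o Y) (Ne.symm hY) with hworse | hbetter
  · exact .single <| Or.inr ⟨X, Y, hXY, (cpt_ne hc).symm, Ne.symm hY,
      fun Z hX hY => (hag Z hX hY).symm, hc', hworse, himp⟩
  · set o'' := Function.update o' Y (o Y)
    have hY'' : o'' Y = o Y := Function.update_self Y _ _
    have hag'' : ∀ Z, Z ≠ Y → o'' Z = o' Z := fun Z hZ => Function.update_of_ne hZ _ _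
    have hstepY : ImpFlip N o' o'' := by
      refine impFlip_of_cpt hag'' ?_
      rw [hY'']
      exact (cpt_congr_of_eq_off (N.cp_ne Y Y · rfl) (fun Z hZ _ => (hag'' Z hZ).symm) _ _).mp
        hbetter
    have hstepX : ImpFlip N o'' o := by
      refine impFlip_of_cpt (X := X) (fun Z hZX => ?_) ?_
      · obtain rfl | hZY := eq_or_ne Z Y
        · exact hY''.symm
        · rw [hag'' Z hZY]
          exact hag Z hZX hZY
      · rw [hag'' X hXY]
        exact hc
    exact .tail (.single hstepY) hstepX

end TCPNet

theorem stmt15_general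
    (N : TCPNet V D)
    (htotal : ∀ (X : V) (o : (Y : V) → D Y) (a b : D X), a ≠ b →
      N.cpt X o a b ∨ N.cpt X o b a)
    (pref : ((X : V) → D X) → ((X : V) → D X) → Prop)
    (hresp : ∀ o₁ o₂, Relation.TransGen (ImpFlip N) o₁ o₂ → pref o₂ o₁) :
    N.Satisfies pref := by
  refine ⟨fun X o o' hag hc => hresp _ _ (.single (TCPNet.impFlip_of_cpt hag hc)), ?_, ?_⟩
  · intro X Y o o' hiarc hag hc
    exact hresp _ _ <| TCPNet.transGen_impFlip_of_cpt_of_important htotal (N.iarc_ne X Y hiarc)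
      (N.iarc_indep X Y hiarc).2 (.inl hiarc) hag hc
  · intro X Y o o' hcit hag hc
    have hci := N.cit_ci X Y o hcit
    exact hresp _ _ <| TCPNet.transGen_impFlip_of_cpt_of_important htotal (N.ci_ne X Y hci)
      (N.ci_indep X Y hci).2 (.inr ((TCPNet.cit_congr_of_eq_off hci hag).mp hcit)) hag hc

/-- for a TCP-net with strictly totally ordered CPTs, every
strict partial order on outcomes that respects the paths of the improving
flip graph (preferring the endpoint of any nonempty directed path of flips to
its starting point) satisfies `N`. -/
theorem stmt15 [Fintype V] [∀ X, Fintype (D X)] [∀ X, Nontrivial (D X)]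
    (N : TCPNet V D)
    (htotal : ∀ (X : V) (o : (Y : V) → D Y) (a b : D X), a ≠ b →
      N.cpt X o a b ∨ N.cpt X o b a)
    (pref : ((X : V) → D X) → ((X : V) → D X) → Prop)
    (hpref : IsPrefOrder pref)
    (hresp : ∀ o₁ o₂, Relation.TransGen (ImpFlip N) o₁ o₂ → pref o₂ o₁) :
    N.Satisfies pref :=
  stmt15_general N htotal pref hresp
end

section
/- Let N be a TCP-net such that every simple cycle in the undirected graph underlying its dependency graph N* contains two edges that are directed in N* and point in opposite directions along that cycle (one clockwise and one counter-clockwise). Then N is conditionally acyclic. -/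
universe u v

variable {V : Type u} {D : V → Type v}

/-- Labels for the edges of a cycle in the underlying undirected multigraph
of the dependency graph: a directed edge traversed forwards, a directed edge
traversed backwards, or an undirected ci-arc. -/
inductive EdgeLab : Type
  | fwd | bwd | und

/-- `v`, `lab` describe a simple cycle in the undirected multigraph
underlying the dependency graph of `N`: `v` lists its (distinct) vertices and
`lab i` records whether the edge between `v i` and `v (i+1)` is a directed
edge of `N*` pointing forwards along the traversal, a directed edge pointing
backwards, or a ci-arc.  For length 2 the two parallel edges must be distinct
edges of the multigraph. -/
def IsUndCycle (N : TCPNet V D) {n : ℕ} (v : Fin n → V) (lab : Fin n → EdgeLab) : Prop :=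
  1 ≤ n ∧ Function.Injective v ∧
    (∀ i, lab i = EdgeLab.fwd → N.dirEdge (v i) (v (finNext i))) ∧
    (∀ i, lab i = EdgeLab.bwd → N.dirEdge (v (finNext i)) (v i)) ∧
    (∀ i, lab i = EdgeLab.und → N.ci (v i) (v (finNext i))) ∧
    (n = 2 → ∀ i j : Fin n, i ≠ j →
      (lab i = EdgeLab.fwd → lab j ≠ EdgeLab.bwd) ∧
      (lab i = EdgeLab.und → lab j ≠ EdgeLab.und))

/-! A directed cycle of the `w`-directed graph can be shortened to a simple one. Label its
edges of `N*` as forwards and its remaining edges as ci-arcs (the CIT orients these along the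
cycle): this is a simple cycle of the underlying graph without backwards edges, contradicting the
hypothesis. In length two, two parallel ci-arcs would be one ci-arc oriented both ways by the same
CIT entry, which antisymmetry rules out. -/

section ClosedChain

variable {α : Type*} {r : α → α → Prop}

lemma exists_chain_of_transGen {a b : α} (h : Relation.TransGen r a b) :
    ∃ n, 0 < n ∧ ∃ p : ℕ → α, p 0 = a ∧ p n = b ∧ ∀ k < n, r (p k) (p (k + 1)) := by
  induction h with
  | @single b hab =>
    refine ⟨1, one_pos, fun k => if k = 0 then a else b, rfl, rfl, fun k hk => ?_⟩
    obtain rfl : k = 0 := by omega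
    simpa using hab
  | @tail b c _ hbc ih =>
    obtain ⟨n, -, p, hp0, hpn, hp⟩ := ih
    refine ⟨n + 1, n.succ_pos, fun k => if k ≤ n then p k else c, by simp [hp0], by simp,
      fun k hk => ?_⟩
    rcases Nat.lt_or_ge k n with hkn | hkn
    · simpa [hkn.le, Nat.succ_le_of_lt hkn] using hp k hkn
    · obtain rfl : k = n := by omega
      simpa [hpn] using hbc

/-- Closed walks of length `n` are indexed by `ℕ` rather than by `Fin n`, so that their
subwalks need no modular arithmetic. -/
def IsClosedChain (r : α → α → Prop) (n : ℕ) (p : ℕ → α) : Prop :=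
  p n = p 0 ∧ ∀ k < n, r (p k) (p (k + 1))

lemma IsClosedChain.shortcut {n : ℕ} {p : ℕ → α} (hp : IsClosedChain r n p) {i j : ℕ}
    (hij : i < j) (hjn : j ≤ n) (heq : p i = p j) :
    IsClosedChain r (j - i) (fun k => p (i + k)) :=
  ⟨by simp [Nat.add_sub_cancel' hij.le, heq], fun k hk => by
    simpa [add_assoc] using hp.2 (i + k) (by omega)⟩

lemma exists_isClosedChain_injOn (h : ∃ n, 0 < n ∧ ∃ p, IsClosedChain r n p) :
    ∃ n, 0 < n ∧ ∃ p, IsClosedChain r n p ∧ Set.InjOn p (Set.Iio n) := by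
  classical
  obtain ⟨hn, p, hp⟩ := Nat.find_spec h
  refine ⟨Nat.find h, hn, p, hp, fun i hi j hj heq => ?_⟩
  by_contra hne
  wlog hij : i < j generalizing i j
  · exact this j hj i hi heq.symm (Ne.symm hne) (by omega)
  have hjn : j < Nat.find h := hj
  exact Nat.find_min h (show j - i < Nat.find h by omega)
    ⟨by omega, _, hp.shortcut hij hjn.le heq⟩

lemma IsClosedChain.rel_finNext {n : ℕ} {p : ℕ → α} (hp : IsClosedChain r n p) (i : Fin n) :
    r (p i) (p (finNext i)) := by
  simp only [finNext]
  rcases Nat.lt_or_ge (i + 1) n with hi | hi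
  · rw [Nat.mod_eq_of_lt hi]
    exact hp.2 i i.isLt
  · obtain hi : (i : ℕ) + 1 = n := by omega
    have hlast := hp.2 i i.isLt
    rw [hi] at hlast
    rwa [hi, Nat.mod_self, ← hp.1]

theorem exists_injective_cycle_of_transGen {a : α} (h : Relation.TransGen r a a) :
    ∃ n, 0 < n ∧ ∃ v : Fin n → α, Function.Injective v ∧ ∀ i, r (v i) (v (finNext i)) := by
  obtain ⟨n, hn, p, hp, hinj⟩ := exists_isClosedChain_injOn <| by
    obtain ⟨n, hn, p, hp0, hpn, hp⟩ := exists_chain_of_transGen h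
    exact ⟨n, hn, p, hpn.trans hp0.symm, hp⟩
  exact ⟨n, hn, fun i => p i, fun i j hij => Fin.ext (hinj i.isLt j.isLt hij), hp.rel_finNext⟩

end ClosedChain

lemma finNext_eq_of_ne {i j : Fin 2} (h : i ≠ j) : finNext i = j := by
  revert i j
  decide

lemma TCPNet.exists_isUndCycle_of_wEdge_cycle (N : TCPNet V D) {w : (X : V) → D X} {n : ℕ}
    (hn : 0 < n) {v : Fin n → V} (hv : Function.Injective v)
    (hcyc : ∀ i, N.wEdge w (v i) (v (finNext i))) :
    ∃ lab, IsUndCycle N v lab ∧ ∀ i, lab i ≠ EdgeLab.bwd := by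
  classical
  have hcit : ∀ i, ¬ N.dirEdge (v i) (v (finNext i)) → N.cit (v i) (v (finNext i)) w :=
    fun i => (hcyc i).resolve_left
  let lab : Fin n → EdgeLab := fun i => if N.dirEdge (v i) (v (finNext i)) then .fwd else .und
  have hbwd : ∀ i, lab i ≠ .bwd := fun i => by dsimp only [lab]; split_ifs <;> simp
  have hund : ∀ i, lab i = .und → ¬ N.dirEdge (v i) (v (finNext i)) := fun i hi hd => by
    simp [lab, hd] at hi
  refine ⟨lab, ⟨hn, hv, fun i hi => ?_, fun i hi => absurd hi (hbwd i),
    fun i hi => N.cit_ci _ _ _ (hcit i (hund i hi)), ?_⟩, hbwd⟩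
  · by_contra hd
    simp [lab, hd] at hi
  · rintro rfl i j hij
    refine ⟨fun _ => hbwd j, fun hi hj => ?_⟩
    have hij' := hcit i (hund i hi)
    have hji' := hcit j (hund j hj)
    rw [finNext_eq_of_ne hij] at hij'
    rw [finNext_eq_of_ne (Ne.symm hij)] at hji'
    exact N.cit_antisymm _ _ _ hij' hji'

theorem stmt17_general
    (N : TCPNet V D)
    (h : ∀ (n : ℕ) (v : Fin n → V) (lab : Fin n → EdgeLab),
      IsUndCycle N v lab →
        (∃ i, lab i = EdgeLab.fwd) ∧ (∃ j, lab j = EdgeLab.bwd)) :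
    N.CondAcyclic := by
  intro w X hX
  obtain ⟨n, hn, v, hv, hcyc⟩ := exists_injective_cycle_of_transGen hX
  obtain ⟨lab, hlab, hbwd⟩ := N.exists_isUndCycle_of_wEdge_cycle hn hv hcyc
  obtain ⟨-, j, hj⟩ := h n v lab hlab
  exact hbwd j hj

/-- if every simple cycle in the undirected graph underlying
the dependency graph of `N` contains two edges that are directed in `N*` and
point in opposite directions along the cycle, then `N` is conditionally
acyclic. -/
theorem stmt17 [Fintype V] [∀ X, Fintype (D X)] [∀ X, Nontrivial (D X)]
    (N : TCPNet V D)
    (h : ∀ (n : ℕ) (v : Fin n → V) (lab : Fin n → EdgeLab),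
      IsUndCycle N v lab →
        (∃ i, lab i = EdgeLab.fwd) ∧ (∃ j, lab j = EdgeLab.bwd)) :
    N.CondAcyclic :=
  stmt17_general N h
end
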